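/- Let (X,E) be transitive, let G ⊆ X × Y and let A ⊆ hull(G) be a disparate set with A∖G ≠ ∅. Then there exist a ∈ A∖G and g ∈ G∖A such that (A∖{a}) ∪ {g} is a disparate set. -/

import Mathlib

/-!
If `a ∈ A \ S` lies in the hull of `S`, some `g ∈ S` shares its second coordinate and has an
adjacent first coordinate. Any point disparate from `a` is then disparate from `g`: a conflict
between it and `g` would, by transitivity of the graph, give a conflict with `a`. So `a` can be
traded for `g`.
-/

open Set

/-- Two points of `X × Y` are disparate: they are distinct, and if their second
coordinates agree then their first coordinates are not adjacent in `G`. -/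
def Disparate {X Y : Type*} (G : SimpleGraph X) (a b : X × Y) : Prop :=
  a ≠ b ∧ (a.2 = b.2 → ¬ G.Adj a.1 b.1)

/-- A set `A ⊆ X × Y` is disparate if any two distinct points of `A` are disparate. -/
def DisparateSet {X Y : Type*} (G : SimpleGraph X) (A : Set (X × Y)) : Prop :=
  ∀ a ∈ A, ∀ b ∈ A, a ≠ b → Disparate G a b

/-- The hull of `A`: all points that fail to be disparate from some point of `A`. -/
def dispHull {X Y : Type*} (G : SimpleGraph X) (A : Set (X × Y)) : Set (X × Y) :=
  {a | ∃ a' ∈ A, ¬ Disparate G a a'}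

/-- The complement of `A`: all points disparate from every point of `A`. -/
def dispCompl {X Y : Type*} (G : SimpleGraph X) (A : Set (X × Y)) : Set (X × Y) :=
  {a | ∀ a' ∈ A, Disparate G a a'}

/-- The graph of the restriction of a set-valued mapping `F` to `V`. -/
def svGraphOn {X Y : Type*} (F : X → Set Y) (V : Set X) : Set (X × Y) :=
  {p | p.1 ∈ V ∧ p.2 ∈ F p.1}

/-- The graph of the complement mapping `F_{W,Z}`, namely
`G(F|_{X∖W}) ∩ compl(Z)`. -/
def complMapGraph {X Y : Type*} (G : SimpleGraph X) (F : X → Set Y) (W : Set X)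
    (Z : Set (X × Y)) : Set (X × Y) :=
  svGraphOn F Wᶜ ∩ dispCompl G Z

/-- The graph `{(x, s x) : x ∈ V}` of the restriction of a point-valued map `s` to `V`. -/
def selGraphOn {X Y : Type*} (s : X → Y) (V : Set X) : Set (X × Y) :=
  {p | p.1 ∈ V ∧ p.2 = s p.1}

/-- `size(S)`: the maximum cardinality of a disparate subset of `S`. -/
noncomputable def dispSize {X Y : Type*} (G : SimpleGraph X) (S : Set (X × Y)) : ℕ :=
  sSup {n | ∃ A ⊆ S, DisparateSet G A ∧ A.ncard = n}

/-- The graph `(X, E)` is transitive. -/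
def GraphTransitive {X : Type*} (G : SimpleGraph X) : Prop :=
  ∀ ⦃x x' x'' : X⦄, G.Adj x x' → G.Adj x' x'' → x ≠ x'' → G.Adj x x''

section

variable {X Y : Type*} {G : SimpleGraph X}

theorem Disparate.symm {a b : X × Y} (h : Disparate G a b) : Disparate G b a :=
  ⟨h.1.symm, fun hy hadj => h.2 hy.symm hadj.symm⟩

theorem not_disparate_iff {a b : X × Y} (hab : a ≠ b) :
    ¬ Disparate G a b ↔ a.2 = b.2 ∧ G.Adj a.1 b.1 := by
  simp [Disparate, hab]

theorem Disparate.of_adj (hG : GraphTransitive G) {p a g : X × Y} (hpa : Disparate G p a)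
    (hy : a.2 = g.2) (hadj : G.Adj a.1 g.1) (hpg : p ≠ g) : Disparate G p g := by
  refine ⟨hpg, fun hpy hpadj => ?_⟩
  have hpy' : p.2 = a.2 := hpy.trans hy.symm
  have hpx : p.1 ≠ a.1 := fun hx => hpa.1 (Prod.ext hx hpy')
  exact hpa.2 hpy' (hG hpadj hadj.symm hpx)

theorem DisparateSet.mono {A B : Set (X × Y)} (hB : DisparateSet G B) (hAB : A ⊆ B) :
    DisparateSet G A :=
  fun a ha b hb hab => hB a (hAB ha) b (hAB hb) hab

theorem DisparateSet.union_singleton {A : Set (X × Y)} {g : X × Y} (hA : DisparateSet G A)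
    (hg : ∀ p ∈ A, p ≠ g → Disparate G p g) : DisparateSet G (A ∪ {g}) := by
  rintro p (hp | rfl) q (hq | rfl) hpq
  · exact hA p hp q hq hpq
  · exact hg p hp hpq
  · exact (hg q hq (Ne.symm hpq)).symm
  · exact absurd rfl hpq

end

theorem disparate_exchange_general {X Y : Type*}
    (G : SimpleGraph X) (hG : GraphTransitive G)
    (S : Set (X × Y)) (A : Set (X × Y)) (hA : A ⊆ dispHull G S)
    (hdisp : DisparateSet G A) (hne : (A \ S).Nonempty) :
    ∃ a ∈ A \ S, ∃ g ∈ S \ A, DisparateSet G (A \ {a} ∪ {g}) := by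
  obtain ⟨a, haA, haS⟩ := hne
  obtain ⟨g, hgS, hag⟩ := hA haA
  have hag_ne : a ≠ g := fun h => haS (h ▸ hgS)
  obtain ⟨hy, hadj⟩ := (not_disparate_iff hag_ne).1 hag
  have hgA : g ∉ A := fun hgA => hag (hdisp a haA g hgA hag_ne)
  refine ⟨a, ⟨haA, haS⟩, g, ⟨hgS, hgA⟩, ?_⟩
  refine (hdisp.mono sdiff_subset).union_singleton fun p hp hpg => ?_
  exact (hdisp p hp.1 a haA hp.2).of_adj hG hy hadj hpg

/-- Exchange lemma: on a transitive graph, a disparate subset of `hull(S)` not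
contained in `S` can exchange a point outside `S` for a point of `S`. -/
theorem disparate_exchange {X Y : Type*} [Fintype X] [Fintype Y]
    (G : SimpleGraph X) (hG : GraphTransitive G)
    (S : Set (X × Y)) (A : Set (X × Y)) (hA : A ⊆ dispHull G S)
    (hdisp : DisparateSet G A) (hne : (A \ S).Nonempty) :
    ∃ a ∈ A \ S, ∃ g ∈ S \ A, DisparateSet G (A \ {a} ∪ {g}) :=
  disparate_exchange_general G hG S A hA hdisp hne
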